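/- Let R be a finite commutative ring with identity 1 ≠ 0 which is decomposable, i.e., R is isomorphic to a product R1 × R2 of two nonzero rings. If the zero-divisor graph Γ(R) is Hamiltonian (contains a Hamiltonian cycle), then α(Γ(R)) = |Z*(R)| / 2. -/

import Mathlib

/-- The zero-divisor graph `Γ(R)`: vertices are the nonzero zero-divisors of `R`,
with distinct vertices `x`, `y` adjacent iff `x * y = 0`. -/
def zdvGraph (R : Type*) [CommRing R] :
    SimpleGraph {x : R // x ≠ 0 ∧ ∃ y ≠ 0, x * y = 0} where
  Adj x y := x ≠ y ∧ (x : R) * y = 0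
  symm := ⟨fun x y ⟨hxy, h⟩ => ⟨hxy.symm, by rwa [mul_comm]⟩⟩
  loopless := ⟨fun x ⟨h, _⟩ => h rfl⟩

/-- The independence number of a simple graph: the maximum cardinality of a set of
pairwise non-adjacent vertices. -/
noncomputable def indepNum {V : Type*} (G : SimpleGraph V) : ℕ :=
  sSup {n | ∃ s : Finset V, (s : Set V).Pairwise (fun a b => ¬ G.Adj a b) ∧ s.card = n}

universe u

/-- A ring is decomposable if it is isomorphic to a product of two nonzero rings. -/
def IsDecomposable (R : Type u) [CommRing R] : Prop :=
  ∃ (R₁ R₂ : Type u) (i₁ : CommRing R₁) (i₂ : CommRing R₂),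
    Nontrivial R₁ ∧ Nontrivial R₂ ∧
      (letI := i₁; letI := i₂; Nonempty (R ≃+* R₁ × R₂))

/-!
A Hamiltonian cycle of `Γ(R)` is a permutation `σ` of `Z*(R)` with `v * σ v = 0` for all `v`.
An independent set `S` is disjoint from `σ S`, so `α(Γ(R)) ≤ |Z*(R)| / 2`; and `|X| ≤ |Y|`
whenever every nonzero annihilator of an element of `X ⊆ Z*(R)` lies in `Y`.

For `R ≅ A × B` this inequality, applied to `X = U(A) × Z(B)`, `Y = 0 × (B ∖ 0)` and to the
mirrored pair, forces either `A` and `B` to be fields of the same size, in which case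
`U(A) × 0` is an independent set of size `|Z*(R)| / 2`, or `1` to be the only unit of `R`.
In the latter case `R` is Boolean (a power `e` of `x` is idempotent, and `x e + 1 - e` is a unit
while `x (1 - e)` is nilpotent), so `x ↦ 1 - x` exchanges a maximal ideal `m` with its
complement, and `(R ∖ m) ∖ {1}` is an independent set of size `|Z*(R)| / 2`.
-/

open Function

theorem indepNum_eq_simpleGraph_indepNum {V : Type*} (G : SimpleGraph V) :
    indepNum G = G.indepNum := by
  simp only [indepNum, SimpleGraph.indepNum, SimpleGraph.isNIndepSet_iff, SimpleGraph.IsIndepSet]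

namespace SimpleGraph

variable {V : Type*} [Fintype V] {G : SimpleGraph V}

theorem Walk.IsHamiltonianCycle.exists_perm_adj [DecidableEq V] {a : V} {p : G.Walk a a}
    (hp : p.IsHamiltonianCycle) : ∃ σ : Equiv.Perm V, ∀ v, G.Adj v (σ v) := by
  have h3 := hp.isCycle.three_le_length
  obtain ⟨n, hn⟩ : ∃ n, p.length = n + 1 := ⟨p.length - 1, by omega⟩
  have hinj : Injective fun i : Fin (n + 1) => p.getVert i := fun i j h =>
    Fin.ext (hp.isCycle.getVert_injOn' (by simp [hn]; omega) (by simp [hn]; omega) h)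
  let E : Fin (n + 1) ≃ V := .ofBijective _ <|
    (Fintype.bijective_iff_injective_and_card _).2 ⟨hinj, by simp [← hn, hp.length_eq]⟩
  refine ⟨(E.symm.trans (finRotate _)).trans E, fun v => ?_⟩
  obtain ⟨i, rfl⟩ := E.surjective v
  have hsucc : p.getVert ↑(i + 1) = p.getVert (i + 1) := by
    rw [Fin.val_add_one]
    split_ifs with h
    · simp [h, ← hn]
    · rfl
  simpa [E, hsucc] using p.adj_getVert_succ (i := i) (by omega)

theorem two_mul_indepNum_le_card (σ : Equiv.Perm V) (hσ : ∀ v, G.Adj v (σ v)) :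
    2 * G.indepNum ≤ Fintype.card V := by
  classical
  obtain ⟨s, hs⟩ := G.exists_isNIndepSet_indepNum
  have hdisj : Disjoint s (s.map σ.toEmbedding) := by
    refine Finset.disjoint_left.2 fun v hv hv' => ?_
    obtain ⟨u, hu, rfl⟩ := Finset.mem_map.1 hv'
    exact hs.isIndepSet hu hv (G.ne_of_adj (hσ u)) (hσ u)
  calc 2 * G.indepNum = (s ∪ s.map σ.toEmbedding).card := by
        rw [Finset.card_union_of_disjoint hdisj, Finset.card_map, hs.card_eq, two_mul]
    _ ≤ Fintype.card V := Finset.card_le_univ _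

end SimpleGraph

theorem exists_pow_isIdempotentElem {M : Type*} [Monoid M] [Finite M] (x : M) :
    ∃ n ≠ 0, IsIdempotentElem (x ^ n) := by
  obtain ⟨i, j, hij, h⟩ := Finite.exists_ne_map_eq_of_infinite fun k : ℕ => x ^ (k + 1)
  wlog hlt : i < j generalizing i j
  · exact this j i hij.symm h.symm (by omega)
  obtain ⟨d, rfl⟩ := Nat.exists_eq_add_of_lt hlt
  have hper : ∀ k t, x ^ (i + 1 + t + k * (d + 1)) = x ^ (i + 1 + t) := by
    intro k t
    induction k with
    | zero => simp
    | succ k ih =>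
      calc x ^ (i + 1 + t + (k + 1) * (d + 1)) = x ^ (i + d + 1 + 1) * x ^ (t + k * (d + 1)) := by
            rw [← pow_add]; ring_nf
        _ = x ^ (i + 1 + t + k * (d + 1)) := by
            rw [← show x ^ (i + 1) = x ^ (i + d + 1 + 1) from h, ← pow_add]; ring_nf
        _ = x ^ (i + 1 + t) := ih
  obtain ⟨t, ht⟩ := Nat.exists_eq_add_of_le (Nat.le_mul_of_pos_right (i + 1) d.succ_pos)
  refine ⟨(i + 1) * (d + 1), by positivity, ?_⟩
  have hN := hper (i + 1) t
  rw [← ht] at hN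
  rwa [IsIdempotentElem, ← pow_add]

section ZeroDivisorGraph

variable {R : Type*} [CommRing R]

theorem exists_mul_eq_zero_iff_not_isUnit [Finite R] {x : R} :
    (∃ y ≠ 0, x * y = 0) ↔ ¬IsUnit x := by
  simp [isUnit_iff_mem_nonZeroDivisors_of_finite, mem_nonZeroDivisors_iff_left, and_comm]

theorem card_zdvGraph_add_ncard_isUnit [Finite R] [Nontrivial R] :
    Nat.card {x : R // x ≠ 0 ∧ ∃ y ≠ 0, x * y = 0} + 1 + {x : R | IsUnit x}.ncard =
      Nat.card R := by
  have hV : {x : R | x ≠ 0 ∧ ∃ y ≠ 0, x * y = 0} = {x : R | IsUnit x}ᶜ \ {0} := by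
    ext x
    rw [Set.mem_ofPred_eq, exists_mul_eq_zero_iff_not_isUnit]
    simp [and_comm]
  calc Nat.card {x : R // x ≠ 0 ∧ ∃ y ≠ 0, x * y = 0} + 1 + {x : R | IsUnit x}.ncard
      = ({x : R | IsUnit x}ᶜ \ {0}).ncard + 1 + {x : R | IsUnit x}.ncard := by
        rw [← hV]; rfl
    _ = {x : R | IsUnit x}ᶜ.ncard + {x : R | IsUnit x}.ncard := by
        rw [Set.ncard_sdiff_singleton_add_one (by simp)]
    _ = Nat.card R := by rw [add_comm, Set.ncard_add_ncard_compl]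

theorem ncard_le_ncard_of_forall_mul_eq_zero [Finite R]
    (σ : Equiv.Perm {x : R // x ≠ 0 ∧ ∃ y ≠ 0, x * y = 0})
    (hσ : ∀ v, (zdvGraph R).Adj v (σ v)) {X Y : Set R}
    (hX : ∀ x ∈ X, x ≠ 0 ∧ ∃ y ≠ 0, x * y = 0) (hXY : ∀ x ∈ X, ∀ y ≠ 0, x * y = 0 → y ∈ Y) :
    X.ncard ≤ Y.ncard :=
  Nat.card_le_card_of_injective
    (fun x : X => ⟨σ ⟨x, hX x x.2⟩, hXY x x.2 _ (σ _).2.1 (hσ ⟨x, hX x x.2⟩).2⟩)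
    fun x x' h => by
      have h' := congrArg (Subtype.val : Y → R) h
      exact Subtype.ext (Subtype.mk.inj (σ.injective (Subtype.ext h')))

theorem ncard_le_indepNum_zdvGraph [Finite R] {I : Set R}
    (hI : ∀ x ∈ I, x ≠ 0 ∧ ∃ y ≠ 0, x * y = 0) (hind : I.Pairwise fun x y => x * y ≠ 0) :
    I.ncard ≤ indepNum (zdvGraph R) := by
  have hfin : (Subtype.val ⁻¹' I : Set {x : R // x ≠ 0 ∧ ∃ y ≠ 0, x * y = 0}).Finite :=
    Set.toFinite _
  rw [indepNum_eq_simpleGraph_indepNum, ← Set.ncard_preimage_of_injective_subset_range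
    Subtype.val_injective fun x hx => ⟨⟨x, hI x hx⟩, rfl⟩, Set.ncard_eq_toFinset_card _ hfin]
  refine SimpleGraph.IsIndepSet.card_le_indepNum fun u hu v hv huv hadj => ?_
  rw [Set.Finite.coe_toFinset] at hu hv
  exact hind hu hv (Subtype.coe_ne_coe.2 huv) hadj.2

theorem isIdempotentElem_of_forall_isUnit_eq_one [Finite R] (h : ∀ u : R, IsUnit u → u = 1)
    (x : R) : IsIdempotentElem x := by
  obtain ⟨n, hn, he⟩ := exists_pow_isIdempotentElem x
  obtain ⟨k, rfl⟩ := Nat.exists_eq_add_one_of_ne_zero hn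
  have hxe : x * x ^ (k + 1) = x ^ (k + 1) := by
    have hunit : (x * x ^ (k + 1) + (1 - x ^ (k + 1))) * (x ^ k * x ^ (k + 1) + (1 - x ^ (k + 1)))
        = 1 := by
      linear_combination (x ^ (k + 1) + 2 - x - x ^ k) * he.eq
    linear_combination h _ (.of_mul_eq_one _ hunit)
  have hx1e : x * (1 - x ^ (k + 1)) = 0 := by
    have hnil : IsNilpotent (x * (1 - x ^ (k + 1))) := ⟨k + 1, by
      rw [mul_pow, he.one_sub.pow_succ_eq]
      linear_combination -he.eq⟩
    linear_combination h _ hnil.isUnit_one_add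
  have hidem := he.eq
  rw [← show x = x ^ (k + 1) by linear_combination hx1e + hxe] at hidem
  exact hidem

theorem two_mul_ncard_compl_of_isPrime [Finite R] (h : ∀ x : R, IsIdempotentElem x)
    (p : Ideal R) [hp : p.IsPrime] : 2 * (p : Set R)ᶜ.ncard = Nat.card R := by
  have hswap : (p : Set R)ᶜ = (fun x => 1 - x) ⁻¹' p := by
    ext x
    simp only [Set.mem_compl_iff, SetLike.mem_coe, Set.mem_preimage]
    refine ⟨fun hx => (hp.mem_or_mem ?_).resolve_left hx, fun h1x hx => hp.ne_top ?_⟩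
    · rw [mul_sub, mul_one, (h x).eq, sub_self]
      exact p.zero_mem
    · exact p.eq_top_iff_one.2 (by simpa using p.add_mem h1x hx)
  rw [two_mul]
  nth_rw 1 [hswap]
  rw [Set.ncard_preimage_of_injective_subset_range sub_right_injective
    fun y _ => ⟨1 - y, sub_sub_cancel 1 y⟩]
  exact Set.ncard_add_ncard_compl _

theorem card_zdvGraph_le_two_mul_indepNum_of_ncard_isUnit_eq_one [Finite R] [Nontrivial R]
    (h : {x : R | IsUnit x}.ncard = 1) :
    Nat.card {x : R // x ≠ 0 ∧ ∃ y ≠ 0, x * y = 0} ≤ 2 * indepNum (zdvGraph R) := by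
  have hunits : ∀ u : R, IsUnit u → u = 1 := fun u hu =>
    (Set.ncard_le_one).1 h.le u hu 1 isUnit_one
  obtain ⟨p, hp⟩ := Ideal.exists_maximal R
  have hcompl := two_mul_ncard_compl_of_isPrime (isIdempotentElem_of_forall_isUnit_eq_one hunits) p
  have hI : ((p : Set R)ᶜ \ {1}).ncard ≤ indepNum (zdvGraph R) := by
    refine ncard_le_indepNum_zdvGraph (fun x hx => ?_) fun x hx y hy _ hxy => ?_
    · obtain ⟨hxp, hx1⟩ := hx
      refine ⟨fun hx0 => hxp (hx0 ▸ p.zero_mem), exists_mul_eq_zero_iff_not_isUnit.2 ?_⟩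
      exact fun hu => hx1 (hunits x hu)
    · exact hp.isPrime.mul_notMem hx.1 hy.1 (hxy ▸ p.zero_mem)
  have hcard := card_zdvGraph_add_ncard_isUnit (R := R)
  have h1 := Set.ncard_sdiff_singleton_add_one (s := (p : Set R)ᶜ) (a := 1)
    fun h1 => hp.ne_top (p.eq_top_iff_one.2 h1)
  omega

end ZeroDivisorGraph

section Product

variable {R A B : Type*} [CommRing R] [CommRing A] [CommRing B]

theorem ncard_preimage_ringEquiv (e : R ≃+* A × B) (s : Set (A × B)) : (e ⁻¹' s).ncard = s.ncard :=
  Set.ncard_preimage_of_injective_subset_range e.injective (by simp [e.surjective.range_eq])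

theorem ncard_isUnit_of_ringEquiv (e : R ≃+* A × B) :
    {x : R | IsUnit x}.ncard = {a : A | IsUnit a}.ncard * {b : B | IsUnit b}.ncard := by
  rw [← Set.ncard_prod, ← ncard_preimage_ringEquiv e]
  congr 1
  ext x
  simp [← Prod.isUnit_iff]

theorem card_zdvGraph_of_ringEquiv [Finite A] [Finite B] [Nontrivial A] (e : R ≃+* A × B) :
    Nat.card {x : R // x ≠ 0 ∧ ∃ y ≠ 0, x * y = 0} + 1 +
      {a : A | IsUnit a}.ncard * {b : B | IsUnit b}.ncard = Nat.card A * Nat.card B := by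
  have : Finite R := .of_equiv _ e.symm.toEquiv
  have : Nontrivial R := e.toEquiv.nontrivial
  rw [← ncard_isUnit_of_ringEquiv e, card_zdvGraph_add_ncard_isUnit, ← Nat.card_prod,
    Nat.card_congr e.toEquiv]

theorem ncard_isUnit_mul_ncard_not_isUnit_lt_card [Finite A] [Finite B] [Nontrivial A]
    (e : R ≃+* A × B) (σ : Equiv.Perm {x : R // x ≠ 0 ∧ ∃ y ≠ 0, x * y = 0})
    (hσ : ∀ v, (zdvGraph R).Adj v (σ v)) :
    {a : A | IsUnit a}.ncard * {b : B | ¬IsUnit b}.ncard < Nat.card B := by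
  have : Finite R := .of_equiv _ e.symm.toEquiv
  calc {a : A | IsUnit a}.ncard * {b : B | ¬IsUnit b}.ncard
      = (e ⁻¹' ({a | IsUnit a} ×ˢ {b | ¬IsUnit b})).ncard := by
        rw [ncard_preimage_ringEquiv, Set.ncard_prod]
    _ ≤ (e ⁻¹' ({0} ×ˢ {0}ᶜ)).ncard := by
        refine ncard_le_ncard_of_forall_mul_eq_zero σ hσ (fun x hx => ?_) fun x hx y hy hxy => ?_
        · refine ⟨fun hx0 => not_isUnit_zero (M₀ := A) (by simpa [hx0] using hx.1),
            exists_mul_eq_zero_iff_not_isUnit.2 fun hu => hx.2 ?_⟩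
          exact (Prod.isUnit_iff.1 ((MulEquiv.isUnit_map e).2 hu)).2
        · have h1 : (e x).1 * (e y).1 = 0 := by simpa using congrArg (fun z => (e z).1) hxy
          refine ⟨hx.1.mul_right_eq_zero.1 h1, fun h2 => hy (e.injective ?_)⟩
          exact Prod.ext (by simpa using hx.1.mul_right_eq_zero.1 h1) (by simpa using h2)
    _ = Nat.card B - 1 := by
        rw [ncard_preimage_ringEquiv, Set.ncard_prod, Set.ncard_singleton, one_mul,
          Set.ncard_compl, Set.ncard_singleton]
    _ < Nat.card B := Nat.sub_lt Nat.card_pos one_pos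

theorem card_zdvGraph_le_two_mul_indepNum_of_ringEquiv [Finite A] [Finite B] [Nontrivial A]
    [Nontrivial B] (e : R ≃+* A × B) (hA : {a : A | ¬IsUnit a}.ncard = 1)
    (hB : {b : B | ¬IsUnit b}.ncard = 1)
    (hAB : {a : A | IsUnit a}.ncard = {b : B | IsUnit b}.ncard) :
    Nat.card {x : R // x ≠ 0 ∧ ∃ y ≠ 0, x * y = 0} ≤ 2 * indepNum (zdvGraph R) := by
  have : Finite R := .of_equiv _ e.symm.toEquiv
  have hI : (e ⁻¹' ({a | IsUnit a} ×ˢ {0})).ncard ≤ indepNum (zdvGraph R) := by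
    refine ncard_le_indepNum_zdvGraph (fun x hx => ?_) fun x hx y hy _ hxy => ?_
    · refine ⟨fun hx0 => not_isUnit_zero (M₀ := A) (by simpa [hx0] using hx.1),
        exists_mul_eq_zero_iff_not_isUnit.2 fun hu => not_isUnit_zero (M₀ := B) ?_⟩
      rw [← show (e x).2 = 0 from hx.2]
      exact (Prod.isUnit_iff.1 ((MulEquiv.isUnit_map e).2 hu)).2
    · exact (hx.1.mul hy.1).ne_zero (by simpa using congrArg (fun z => (e z).1) hxy)
  rw [ncard_preimage_ringEquiv, Set.ncard_prod, Set.ncard_singleton, mul_one] at hI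
  have hcard := card_zdvGraph_of_ringEquiv e
  rw [← Set.ncard_add_ncard_compl {a : A | IsUnit a},
    ← Set.ncard_add_ncard_compl {b : B | IsUnit b}] at hcard
  simp only [Set.compl_ofPred, hA, hB, hAB] at hcard
  nlinarith

end Product

theorem Nat.eq_one_and_eq_or_eq_one_of_mul_lt_add {a b p q : ℕ} (ha : 1 ≤ a) (hp : 1 ≤ p)
    (hq : 1 ≤ q) (h₁ : a * q < b + q) (h₂ : b * p < a + p) :
    (p = 1 ∧ q = 1 ∧ a = b) ∨ (a = 1 ∧ b = 1) := by
  rcases Nat.lt_or_ge 1 a with ha' | ha'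
  · have hpq : p * q ≤ 1 := by nlinarith
    obtain rfl : p = 1 := by nlinarith
    obtain rfl : q = 1 := by nlinarith
    omega
  · obtain rfl : a = 1 := by omega
    exact Or.inr ⟨rfl, by nlinarith⟩

theorem stmt5_general (R : Type u) [CommRing R] [Fintype R] [DecidableEq R]
    (hdec : IsDecomposable R) (hham : (zdvGraph R).IsHamiltonian) :
    2 * indepNum (zdvGraph R) = Nat.card {x : R // x ≠ 0 ∧ ∃ y ≠ 0, x * y = 0} := by
  obtain ⟨A, B, _, _, _, _, ⟨e⟩⟩ := hdec
  have : Nontrivial R := e.toEquiv.nontrivial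
  have : Finite (A × B) := .of_equiv R e.toEquiv
  have : Finite A := .prod_left B
  have : Finite B := .prod_right A
  have hA := Set.ncard_add_ncard_compl {a : A | IsUnit a}
  have hB := Set.ncard_add_ncard_compl {b : B | IsUnit b}
  simp only [Set.compl_ofPred] at hA hB
  have huA : 0 < {a : A | IsUnit a}.ncard := (Set.ncard_pos).2 ⟨1, isUnit_one⟩
  have huB : 0 < {b : B | IsUnit b}.ncard := (Set.ncard_pos).2 ⟨1, isUnit_one⟩
  have hzA : 0 < {a : A | ¬IsUnit a}.ncard := (Set.ncard_pos).2 ⟨0, not_isUnit_zero⟩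
  have hzB : 0 < {b : B | ¬IsUnit b}.ncard := (Set.ncard_pos).2 ⟨0, not_isUnit_zero⟩
  have hcard := card_zdvGraph_of_ringEquiv e
  obtain ⟨_, p, hp⟩ := hham (by rw [← Nat.card_eq_fintype_card]; nlinarith)
  obtain ⟨σ, hσ⟩ := hp.exists_perm_adj
  have hAB := ncard_isUnit_mul_ncard_not_isUnit_lt_card e σ hσ
  have hBA := ncard_isUnit_mul_ncard_not_isUnit_lt_card (e.trans RingEquiv.prodComm) σ hσ
  refine le_antisymm ?_ ?_
  · rw [indepNum_eq_simpleGraph_indepNum, Nat.card_eq_fintype_card]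
    exact SimpleGraph.two_mul_indepNum_le_card σ hσ
  rcases Nat.eq_one_and_eq_or_eq_one_of_mul_lt_add huA hzA hzB (hB ▸ hAB) (hA ▸ hBA) with
    ⟨hA₁, hB₁, hAB⟩ | ⟨hA₁, hB₁⟩
  · exact card_zdvGraph_le_two_mul_indepNum_of_ringEquiv e hA₁ hB₁ hAB
  · exact card_zdvGraph_le_two_mul_indepNum_of_ncard_isUnit_eq_one
      (by rw [ncard_isUnit_of_ringEquiv e, hA₁, hB₁])

theorem stmt5 (R : Type u) [CommRing R] [Nontrivial R] [Fintype R] [DecidableEq R]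
    (hdec : IsDecomposable R) (hham : (zdvGraph R).IsHamiltonian) :
    2 * indepNum (zdvGraph R) = Nat.card {x : R // x ≠ 0 ∧ ∃ y ≠ 0, x * y = 0} :=
  stmt5_general R hdec hham
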